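/- arXiv:1403.3079 — 5 statements merged into one kernel-verified Lean document; each statement's English description precedes it below -/
import Mathlib

section
/- Let L be a finite relational language in which every relation symbol has arity at most 2, and let P₂ be a 1-adequate class of finite L-structures. Then the class RP₂ has the amalgamation property: for all A, B, C ∈ RP₂ and embeddings f_B : A → B, f_C : A → C, there exist D ∈ RP₂ and embeddings g_B : B → D, g_C : C → D such that g_B ∘ f_B = g_C ∘ f_C. -/
open FirstOrder CategoryTheory

/-- A class `P` of finite structures in a binary relational language is *1-adequate* if it
consists of finite structures, is closed under isomorphism, is closed under substructures
(the hereditary property), and any two one-element structures in `P` embed with disjoint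
images into a common member of `P`. -/
def OneAdequate (L : FirstOrder.Language) (P : Set (Bundled L.Structure)) : Prop :=
  (∀ M ∈ P, Finite M) ∧
  (∀ M N : Bundled L.Structure, Nonempty (M ≃[L] N) → M ∈ P → N ∈ P) ∧
  (∀ M : Bundled L.Structure, M ∈ P → ∀ S : L.Substructure M,
      (Bundled.of (↥S) : Bundled L.Structure) ∈ P) ∧
  (∀ A B : Bundled L.Structure, A ∈ P → B ∈ P → Nat.card A = 1 → Nat.card B = 1 →
      ∃ C ∈ P, ∃ (f : A ↪[L] C) (g : B ↪[L] C), Disjoint (Set.range f) (Set.range g))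

/-- Given a class `P` of finite structures, `RP L P` is the class of all finite `L`-structures
all of whose substructures with exactly 1 or exactly 2 elements are isomorphic to a member
of `P`. -/
def RP (L : FirstOrder.Language) (P : Set (Bundled L.Structure)) :
    Set (Bundled L.Structure) :=
  {N | Finite N ∧ ∀ S : L.Substructure N, (Nat.card S = 1 ∨ Nat.card S = 2) →
      ∃ M ∈ P, Nonempty (S ≃[L] M)}

/-!
Amalgamate freely: let `D` be `B` and `C` glued along the images of `A`. A tuple inside `B` or
inside `C` keeps its relations; the two agree on the image of `A` because `fB` and `fC` are
embeddings. For a mixed pair `b ∈ B \ fB(A)`, `c ∈ C \ fC(A)` the one-point substructures at `b`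
and `c` are (up to isomorphism) in `P`, so 1-adequacy puts disjoint copies of them into a member
of `P`; the two-point substructure spanned by the copies is again in `P` and realises the atomic
types of `b` and `c` on distinct points, and tuples meeting both `b` and `c` take their relations
from it. Every substructure of `D` with at most two elements then lies inside `B`, inside `C`, or
inside the image of one of these two-point witnesses, so `D ∈ RP L P`.
-/

open FirstOrder Language Structure Set

universe w

namespace FirstOrder.Language

variable (L : Language) {M N K : Type*} [L.Structure M] [L.Structure N] [L.Structure K]

def SameAtomicType (m : M) (n : N) : Prop :=
  ∀ ⦃k : ℕ⦄ (r : L.Relations k),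
    RelMap r (fun _ : Fin k => m) ↔ RelMap r (fun _ : Fin k => n)

structure PairWitness (m : M) (n : N) where
  Q : Bundled.{w} L.Structure
  left : Q
  right : Q
  left_ne_right : left ≠ right
  eq_left_or_eq_right : ∀ q, q = left ∨ q = right
  sameAtomicType_left : SameAtomicType L m left
  sameAtomicType_right : SameAtomicType L n right

variable {L}

theorem SameAtomicType.symm {m : M} {n : N} (h : SameAtomicType L m n) :
    SameAtomicType L n m :=
  fun _ r => (h r).symm

theorem SameAtomicType.trans {m : M} {n : N} {k : K} (h : SameAtomicType L m n)
    (h' : SameAtomicType L n k) : SameAtomicType L m k :=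
  fun _ r => (h r).trans (h' r)

theorem Embedding.sameAtomicType (f : M ↪[L] N) (m : M) : SameAtomicType L m (f m) :=
  fun _ r => (f.map_rel r fun _ => m).symm

end FirstOrder.Language

theorem eq_const_or_eq_const_or_mem_range {α ι : Type*} {u v : α} (huv : ∀ a, a = u ∨ a = v)
    (w : ι → α) :
    w = Function.const ι u ∨ w = Function.const ι v ∨ (u ∈ range w ∧ v ∈ range w) := by
  by_cases hu : u ∈ range w
  · by_cases hv : v ∈ range w
    · exact .inr (.inr ⟨hu, hv⟩)
    · exact .inl (funext fun i => (huv (w i)).resolve_right fun h => hv ⟨i, h⟩)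
  · exact .inr (.inl (funext fun i => (huv (w i)).resolve_left fun h => hu ⟨i, h⟩))

theorem exists_subset_pair_of_ncard {α : Type*} {s : Set α} (h : s.ncard = 1 ∨ s.ncard = 2) :
    ∃ x y, s ⊆ {x, y} := by
  rcases h with h | h
  · obtain ⟨x, rfl⟩ := ncard_eq_one.1 h
    exact ⟨x, x, by simp⟩
  · obtain ⟨x, y, -, rfl⟩ := ncard_eq_two.1 h
    exact ⟨x, y, subset_rfl⟩

theorem exists_bundled_equiv_of_finite {L : FirstOrder.Language} (M : Type*) [L.Structure M]
    [Finite M] :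
    ∃ N : Bundled.{w} L.Structure, Nonempty (M ≃[L] N) := by
  obtain ⟨n, ⟨e⟩⟩ := Finite.exists_equiv_fin M
  let e' : M ≃ ULift.{w} (Fin n) := e.trans Equiv.ulift.symm
  let _ : L.Structure (ULift.{w} (Fin n)) := e'.inducedStructure
  exact ⟨Bundled.of (ULift.{w} (Fin n)), ⟨e'.inducedStructureEquiv⟩⟩

section RP

variable {L : FirstOrder.Language} {P : Set (Bundled L.Structure)}

theorem mem_RP_of_mem (hP : OneAdequate L P) {M : Bundled L.Structure} (hM : M ∈ P) :
    M ∈ RP L P :=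
  ⟨hP.1 M hM, fun S _ => ⟨Bundled.of S, hP.2.2.1 M hM S, ⟨Language.Equiv.refl L S⟩⟩⟩

theorem exists_equiv_of_subset_range {M : Bundled L.Structure} (hM : M ∈ RP L P) {N : Type*}
    [L.Structure N] (g : M ↪[L] N) {S : L.Substructure N} (hS : (S : Set N) ⊆ range g)
    (hcard : Nat.card S = 1 ∨ Nat.card S = 2) : ∃ Q ∈ P, Nonempty (S ≃[L] Q) := by
  have hmap : (S.comap g.toHom).map g.toHom = S := le_antisymm Substructure.map_comap_le
    fun x hx => by obtain ⟨m, rfl⟩ := hS hx; exact ⟨m, hx, rfl⟩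
  have e := g.substructureEquivMap (S.comap g.toHom)
  rw [hmap] at e
  obtain ⟨Q, hQ, ⟨e'⟩⟩ := hM.2 _ (by rwa [Nat.card_congr e.toEquiv])
  exact ⟨Q, hQ, ⟨e'.comp e.symm⟩⟩

theorem mem_RP_of_equiv {M N : Bundled L.Structure} (hM : M ∈ RP L P) (e : M ≃[L] N) :
    N ∈ RP L P :=
  ⟨haveI := hM.1; .of_equiv _ e.toEquiv, fun _ hcard =>
    exists_equiv_of_subset_range hM e.toEmbedding (fun z _ => ⟨e.symm z, e.apply_symm_apply z⟩)
      hcard⟩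

variable [L.IsRelational]

theorem exists_mem_card_eq_one_sameAtomicType {M : Bundled L.Structure} (hM : M ∈ RP L P)
    (m : M) :
    ∃ Q ∈ P, Nat.card Q = 1 ∧ ∃ q : Q, SameAtomicType L m q := by
  have hm : m ∈ Substructure.closure L {m} := Substructure.subset_closure rfl
  have hcard : Nat.card (Substructure.closure L {m}) = 1 := by
    rw [← SetLike.coe_sort_coe, Substructure.closure_eq_of_isRelational, Nat.card_unique]
  obtain ⟨Q, hQ, ⟨e⟩⟩ := hM.2 _ (.inl hcard)
  refine ⟨Q, hQ, Nat.card_congr e.toEquiv ▸ hcard, e ⟨m, hm⟩, ?_⟩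
  exact ((Substructure.subtype _).sameAtomicType ⟨m, hm⟩).symm.trans
    (e.toEmbedding.sameAtomicType _)

theorem exists_pairWitness (hP : OneAdequate L P) {M N : Bundled L.Structure} (hM : M ∈ RP L P)
    (hN : N ∈ RP L P) (m : M) (n : N) :
    ∃ W : PairWitness L m n, W.Q ∈ P := by
  obtain ⟨Qm, hQm, hm1, qm, hqm⟩ := exists_mem_card_eq_one_sameAtomicType hM m
  obtain ⟨Qn, hQn, hn1, qn, hqn⟩ := exists_mem_card_eq_one_sameAtomicType hN n
  obtain ⟨W, hW, f, g, hfg⟩ := hP.2.2.2 Qm Qn hQm hQn hm1 hn1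
  let T := Substructure.closure L {f qm, g qn}
  have mem_T : ∀ x, x ∈ T ↔ x = f qm ∨ x = g qn :=
    fun x => Substructure.mem_closure_iff_of_isRelational L _ x
  have hm : f qm ∈ T := (mem_T _).2 (.inl rfl)
  have hn : g qn ∈ T := (mem_T _).2 (.inr rfl)
  refine ⟨⟨Bundled.of T, ⟨f qm, hm⟩, ⟨g qn, hn⟩,
    fun h => disjoint_left.1 hfg ⟨qm, rfl⟩ ⟨qn, (congrArg Subtype.val h).symm⟩,
    fun q => ((mem_T q.1).1 q.2).imp Subtype.ext Subtype.ext,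
    (hqm.trans (f.sameAtomicType qm)).trans (T.subtype.sameAtomicType ⟨_, hm⟩).symm,
    (hqn.trans (g.sameAtomicType qn)).trans (T.subtype.sameAtomicType ⟨_, hn⟩).symm⟩,
    hP.2.2.1 W hW T⟩

end RP

namespace Amalgam

variable {L : FirstOrder.Language} {A B C : Type*} [L.Structure A] [L.Structure B]
  [L.Structure C] (fB : A ↪[L] B) (fC : A ↪[L] C)

abbrev Carrier (B : Type*) (fC : A ↪[L] C) : Type _ := B ⊕ {c : C // c ∉ range fC}

open Classical in
noncomputable def ofRight (c : C) : Carrier B fC :=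
  if h : c ∈ range fC then .inl (fB h.choose) else .inr ⟨c, h⟩

theorem ofRight_apply (a : A) : ofRight fB fC (fC a) = .inl (fB a) := by
  have h : fC a ∈ range fC := ⟨a, rfl⟩
  rw [ofRight, dif_pos h, fC.injective h.choose_spec]

theorem ofRight_of_notMem {c : C} (h : c ∉ range fC) : ofRight fB fC c = .inr ⟨c, h⟩ :=
  dif_neg h

theorem exists_of_ofRight_eq_inl {c : C} {b : B} (h : ofRight fB fC c = .inl b) :
    ∃ a, fC a = c ∧ fB a = b := by
  by_cases hc : c ∈ range fC
  · obtain ⟨a, rfl⟩ := hc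
    rw [ofRight_apply] at h
    exact ⟨a, rfl, Sum.inl_injective h⟩
  · rw [ofRight_of_notMem fB fC hc] at h
    exact absurd h Sum.inr_ne_inl

theorem ofRight_injective : Function.Injective (ofRight fB fC) := by
  intro c c' h
  by_cases hc : c ∈ range fC
  · obtain ⟨a, rfl⟩ := hc
    obtain ⟨a', rfl, ha'⟩ :=
      exists_of_ofRight_eq_inl fB fC (h.symm.trans (ofRight_apply fB fC a))
    rw [fB.injective ha']
  · by_cases hc' : c' ∈ range fC
    · obtain ⟨a', rfl⟩ := hc'
      obtain ⟨a, rfl, -⟩ := exists_of_ofRight_eq_inl fB fC (h.trans (ofRight_apply fB fC a'))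
      exact absurd ⟨a, rfl⟩ hc
    · rw [ofRight_of_notMem fB fC hc, ofRight_of_notMem fB fC hc'] at h
      exact congrArg Subtype.val (Sum.inr_injective h)

theorem relMap_iff_of_inl_comp_eq_ofRight_comp {n : ℕ} (r : L.Relations n) {y : Fin n → B}
    {z : Fin n → C} (h : Sum.inl ∘ y = ofRight fB fC ∘ z) : RelMap r y ↔ RelMap r z := by
  choose a hz hy using fun k => exists_of_ofRight_eq_inl fB fC (congrFun h k).symm
  obtain rfl : fB ∘ a = y := funext hy
  obtain rfl : fC ∘ a = z := funext hz
  exact (fB.map_rel r a).trans (fC.map_rel r a).symm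

variable (wit : ∀ (b : B) (c : C), PairWitness.{w} L b c)

open Classical in
noncomputable def ofPair (b : B) (c : {c : C // c ∉ range fC}) :
    (wit b c).Q → Carrier B fC :=
  fun q => if q = (wit b c).left then .inl b else .inr c

variable {fC wit}

theorem ofPair_left (b : B) (c : {c : C // c ∉ range fC}) :
    ofPair fC wit b c (wit b c).left = .inl b := if_pos rfl

theorem ofPair_right (b : B) (c : {c : C // c ∉ range fC}) :
    ofPair fC wit b c (wit b c).right = .inr c := if_neg (wit b c).left_ne_right.symm

theorem ofPair_eq_inl_or_eq_inr (b : B) (c : {c : C // c ∉ range fC}) (q : (wit b c).Q) :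
    ofPair fC wit b c q = .inl b ∨ ofPair fC wit b c q = .inr c := by
  rcases (wit b c).eq_left_or_eq_right q with rfl | rfl
  exacts [.inl (ofPair_left b c), .inr (ofPair_right b c)]

theorem ofPair_injective (b : B) (c : {c : C // c ∉ range fC}) :
    Function.Injective (ofPair fC wit b c) := by
  intro q q' h
  rcases (wit b c).eq_left_or_eq_right q with rfl | rfl <;>
    rcases (wit b c).eq_left_or_eq_right q' with rfl | rfl <;>
    simp_all [ofPair_left, ofPair_right]

theorem eq_of_ofPair_comp_eq {n : ℕ} {b b' : B} {c c' : {c : C // c ∉ range fC}}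
    {w : Fin n → (wit b c).Q} {w' : Fin n → (wit b' c').Q}
    (h : ofPair fC wit b' c' ∘ w' = ofPair fC wit b c ∘ w)
    (hl : (wit b' c').left ∈ range w') (hr : (wit b' c').right ∈ range w') :
    b' = b ∧ c' = c := by
  obtain ⟨k, hk⟩ := hl
  obtain ⟨k', hk'⟩ := hr
  have h1 := congrFun h k
  have h2 := congrFun h k'
  simp only [Function.comp_apply, hk, hk', ofPair_left, ofPair_right] at h1 h2
  rcases ofPair_eq_inl_or_eq_inr b c (w k) with h | h <;>
    rcases ofPair_eq_inl_or_eq_inr b c (w k') with h' | h' <;>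
    simp_all

theorem inl_comp_ne_ofPair_comp {n : ℕ} {b : B} {c : {c : C // c ∉ range fC}} {y : Fin n → B}
    {w : Fin n → (wit b c).Q} (hr : (wit b c).right ∈ range w) :
    Sum.inl ∘ y ≠ ofPair fC wit b c ∘ w := by
  obtain ⟨k, hk⟩ := hr
  intro h
  have := congrFun h k
  simp only [Function.comp_apply, hk, ofPair_right] at this
  exact Sum.inl_ne_inr this

theorem ofRight_comp_ne_ofPair_comp {n : ℕ} {b : B} (hb : b ∉ range fB)
    {c : {c : C // c ∉ range fC}} {y : Fin n → C} {w : Fin n → (wit b c).Q}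
    (hl : (wit b c).left ∈ range w) : ofRight fB fC ∘ y ≠ ofPair fC wit b c ∘ w := by
  obtain ⟨k, hk⟩ := hl
  intro h
  have := congrFun h k
  simp only [Function.comp_apply, hk, ofPair_left] at this
  obtain ⟨a, -, rfl⟩ := exists_of_ofRight_eq_inl fB fC this
  exact hb ⟨a, rfl⟩

variable (fC wit)

theorem inl_inr_subset_range (b : B) (c : {c : C // c ∉ range fC}) :
    {.inl b, .inr c} ⊆ range (ofRight fB fC) ∨
      ∃ b' c', b' ∉ range fB ∧ {.inl b, .inr c} ⊆ range (ofPair fC wit b' c') := by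
  by_cases hb : b ∈ range fB
  · obtain ⟨a, rfl⟩ := hb
    refine .inl ?_
    rintro _ (rfl | rfl)
    exacts [⟨fC a, ofRight_apply fB fC a⟩, ⟨c, ofRight_of_notMem fB fC c.2⟩]
  · refine .inr ⟨b, c, hb, ?_⟩
    rintro _ (rfl | rfl)
    exacts [⟨_, ofPair_left b c⟩, ⟨_, ofPair_right b c⟩]

theorem pair_subset_range (x y : Carrier B fC) :
    {x, y} ⊆ range (Sum.inl : B → Carrier B fC) ∨ {x, y} ⊆ range (ofRight fB fC) ∨
      ∃ b c, b ∉ range fB ∧ {x, y} ⊆ range (ofPair fC wit b c) := by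
  rcases x with b | c <;> rcases y with b' | c'
  · exact .inl (by rintro _ (rfl | rfl) <;> exact ⟨_, rfl⟩)
  · exact .inr (inl_inr_subset_range fB fC wit b c')
  · rw [pair_comm]
    exact .inr (inl_inr_subset_range fB fC wit b' c)
  · refine .inr (.inl ?_)
    rintro _ (rfl | rfl)
    exacts [⟨c, ofRight_of_notMem fB fC c.2⟩, ⟨c', ofRight_of_notMem fB fC c'.2⟩]

variable [L.IsRelational]

/-- Tuples meeting both points of a mixed pair are read off its witness; every other tuple of a
mixed pair lies in `B` or in `C`, so the three kinds of pieces overlap only along `A`. -/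
noncomputable def _root_.amalgam : Bundled L.Structure where
  α := Carrier B fC
  str := { RelMap := fun {n} r z =>
    (∃ y : Fin n → B, Sum.inl ∘ y = z ∧ RelMap r y) ∨
    (∃ y : Fin n → C, ofRight fB fC ∘ y = z ∧ RelMap r y) ∨
    ∃ (b : B) (c : {c : C // c ∉ range fC}), b ∉ range fB ∧ ∃ w : Fin n → (wit b c).Q,
      ofPair fC wit b c ∘ w = z ∧ (wit b c).left ∈ range w ∧ (wit b c).right ∈ range w ∧
        RelMap r w }

variable {fB fC wit}

theorem relMap_inl_comp {n : ℕ} (r : L.Relations n) (y : Fin n → B) :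
    RelMap (M := amalgam fB fC wit) r (Sum.inl ∘ y) ↔ RelMap r y := by
  refine ⟨?_, fun h => .inl ⟨y, rfl, h⟩⟩
  rintro (⟨y', hy', h⟩ | ⟨z, hz, h⟩ | ⟨b, c, -, w, hw, -, hr, -⟩)
  · rwa [← Sum.inl_injective.comp_left hy']
  · exact (relMap_iff_of_inl_comp_eq_ofRight_comp fB fC r hz.symm).2 h
  · exact absurd hw.symm (inl_comp_ne_ofPair_comp hr)

theorem relMap_ofRight_comp {n : ℕ} (r : L.Relations n) (y : Fin n → C) :
    RelMap (M := amalgam fB fC wit) r (ofRight fB fC ∘ y) ↔ RelMap r y := by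
  refine ⟨?_, fun h => .inr (.inl ⟨y, rfl, h⟩)⟩
  rintro (⟨z, hz, h⟩ | ⟨y', hy', h⟩ | ⟨b, c, hb, w, hw, hl, -, -⟩)
  · exact (relMap_iff_of_inl_comp_eq_ofRight_comp fB fC r hz).1 h
  · rwa [← (ofRight_injective fB fC).comp_left hy']
  · exact absurd hw.symm (ofRight_comp_ne_ofPair_comp fB hb hl)

theorem relMap_ofPair_comp {b : B} (hb : b ∉ range fB) (c : {c : C // c ∉ range fC}) {n : ℕ}
    (r : L.Relations n) (w : Fin n → (wit b c).Q) :
    RelMap (M := amalgam fB fC wit) r (ofPair fC wit b c ∘ w) ↔ RelMap r w := by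
  rcases eq_const_or_eq_const_or_mem_range (wit b c).eq_left_or_eq_right w with
    rfl | rfl | ⟨hl, hr⟩
  · have : ofPair fC wit b c ∘ Function.const (Fin n) (wit b c).left =
        Sum.inl ∘ fun _ : Fin n => b :=
      funext fun _ => ofPair_left b c
    exact (congrArg (RelMap (M := amalgam fB fC wit) r) this).to_iff.trans
      ((relMap_inl_comp r _).trans ((wit b c).sameAtomicType_left r))
  · have : ofPair fC wit b c ∘ Function.const (Fin n) (wit b c).right =
        ofRight fB fC ∘ fun _ => c.1 :=
      funext fun _ => (ofPair_right b c).trans (ofRight_of_notMem fB fC c.2).symm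
    exact (congrArg (RelMap (M := amalgam fB fC wit) r) this).to_iff.trans
      ((relMap_ofRight_comp r _).trans ((wit b c).sameAtomicType_right r))
  refine ⟨?_, fun h => .inr (.inr ⟨b, c, hb, w, rfl, hl, hr, h⟩)⟩
  rintro (⟨y, hy, -⟩ | ⟨y, hy, -⟩ | ⟨b', c', -, w', hw', hl', hr', h⟩)
  · exact absurd hy (inl_comp_ne_ofPair_comp hr)
  · exact absurd hy (ofRight_comp_ne_ofPair_comp fB hb hl)
  · obtain ⟨rfl, rfl⟩ := eq_of_ofPair_comp_eq hw' hl' hr'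
    rwa [← (ofPair_injective _ _).comp_left hw']

noncomputable def leftEmbedding : B ↪[L] amalgam fB fC wit where
  toFun := Sum.inl
  inj' := Sum.inl_injective
  map_fun' f := isEmptyElim f
  map_rel' := relMap_inl_comp

noncomputable def rightEmbedding : C ↪[L] amalgam fB fC wit where
  toFun := ofRight fB fC
  inj' := ofRight_injective fB fC
  map_fun' f := isEmptyElim f
  map_rel' := relMap_ofRight_comp

noncomputable def pairEmbedding {b : B} (hb : b ∉ range fB) (c : {c : C // c ∉ range fC}) :
    (wit b c).Q ↪[L] amalgam fB fC wit where
  toFun := ofPair fC wit b c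
  inj' := ofPair_injective b c
  map_fun' f := isEmptyElim f
  map_rel' := relMap_ofPair_comp hb c

end Amalgam

open Amalgam in
theorem amalgam_mem_RP {L : FirstOrder.Language} [L.IsRelational]
    {P : Set (Bundled.{w} L.Structure)} (hP : OneAdequate L P) {A B C : Bundled L.Structure}
    (fB : A ↪[L] B) (fC : A ↪[L] C)
    (hB : B ∈ RP L P) (hC : C ∈ RP L P) (wit : ∀ (b : B) (c : C), PairWitness.{w} L b c)
    (hwit : ∀ b c, (wit b c).Q ∈ P) : amalgam fB fC wit ∈ RP L P := by
  refine ⟨?_, fun S hcard => ?_⟩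
  · have := hB.1
    have := hC.1
    exact (inferInstance : Finite (Carrier B fC))
  obtain ⟨x, y, hxy⟩ := exists_subset_pair_of_ncard (s := (S : Set (amalgam fB fC wit)))
    (by rwa [← Nat.card_coe_set_eq])
  rcases pair_subset_range fB fC wit x y with h | h | ⟨b, c, hb, h⟩
  · exact exists_equiv_of_subset_range hB leftEmbedding (hxy.trans h) hcard
  · exact exists_equiv_of_subset_range hC rightEmbedding (hxy.trans h) hcard
  · exact exists_equiv_of_subset_range (mem_RP_of_mem hP (hwit b c)) (pairEmbedding hb c)
      (hxy.trans h) hcard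

open Amalgam in
theorem statement2_general {L : FirstOrder.Language} [L.IsRelational]
    (P : Set (Bundled L.Structure)) (hP : OneAdequate L P) :
    ∀ (A B C : Bundled L.Structure) (fB : A ↪[L] B) (fC : A ↪[L] C),
      A ∈ RP L P → B ∈ RP L P → C ∈ RP L P →
      ∃ (D : Bundled L.Structure) (gB : B ↪[L] D) (gC : C ↪[L] D),
        D ∈ RP L P ∧ gB.comp fB = gC.comp fC := by
  intro A B C fB fC _ hB hC
  choose wit hwit using fun (b : B) (c : C) => exists_pairWitness hP hB hC b c
  have hD := amalgam_mem_RP hP fB fC hB hC wit hwit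
  have := hD.1
  -- `amalgam` lives in the universe of `B ⊕ C`; `D` is asked for in an arbitrary one.
  obtain ⟨D, ⟨e⟩⟩ := exists_bundled_equiv_of_finite (L := L) (amalgam fB fC wit)
  refine ⟨D, e.toEmbedding.comp leftEmbedding, e.toEmbedding.comp rightEmbedding,
    mem_RP_of_equiv hD e, ?_⟩
  ext a
  exact congrArg e (ofRight_apply fB fC a).symm

/-- If `L` is a finite relational language with all relation symbols of arity at most 2 and
`P` is a 1-adequate class of finite `L`-structures, then `RP L P` has the amalgamation
property. -/
theorem statement2 {L : FirstOrder.Language} [L.IsRelational]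
    (hfinL : ∀ n, Finite (L.Relations n))
    (hbin : ∀ n, 2 < n → IsEmpty (L.Relations n))
    (P : Set (Bundled L.Structure)) (hP : OneAdequate L P) :
    ∀ (A B C : Bundled L.Structure) (fB : A ↪[L] B) (fC : A ↪[L] C),
      A ∈ RP L P → B ∈ RP L P → C ∈ RP L P →
      ∃ (D : Bundled L.Structure) (gB : B ↪[L] D) (gC : C ↪[L] D),
        D ∈ RP L P ∧ gB.comp fB = gC.comp fC :=
  statement2_general P hP
end

section
/- Let G be a simple graph on a vertex set V satisfying the extension property, and let M be the doubled graph of G on V × Bool. Then for all distinct vertices u = (a,i) and v = (b,j) of M: u and v have no common neighbor in M if and only if a = b. (Hence the equivalence relation identifying (a,0) with (a,1) is defined in M by the graph-theoretic condition 'x = y, or x ≠ y and x and y have no common neighbor'.) -/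
/-- The doubled graph of a simple graph `G` on `V`: its vertex set is `V × Bool`, and
`(a, i)` is adjacent to `(b, j)` iff either `i = j` and `a` is adjacent to `b` in `G`,
or `i ≠ j` and `a` is not adjacent to `b` in `G`. -/
def doubled {V : Type*} (G : SimpleGraph V) : SimpleGraph (V × Bool) where
  Adj u v := (u.2 = v.2 ∧ G.Adj u.1 v.1) ∨ (u.2 ≠ v.2 ∧ ¬ G.Adj u.1 v.1)
  symm := by
    constructor
    intro u v h
    rcases h with ⟨h1, h2⟩ | ⟨h1, h2⟩
    · exact Or.inl ⟨h1.symm, h2.symm⟩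
    · exact Or.inr ⟨h1.symm, fun h => h2 h.symm⟩
  loopless := by
    constructor
    intro u h
    rcases h with ⟨_, h2⟩ | ⟨h1, _⟩
    · exact G.irrefl h2
    · exact h1 rfl

/-- For a vertex `u = (a, i)` of the doubled graph, `prime u` is the vertex `(a, ¬i)`. -/
def prime {V : Type*} (u : V × Bool) : V × Bool := (u.1, !u.2)

/-- A simple graph `G` on `V` has the extension property if for all finite disjoint sets
`A, B ⊆ V` there is a vertex `c ∉ A ∪ B` adjacent to every vertex of `A` and to no vertex
of `B`. -/
def ExtensionProperty {V : Type*} (G : SimpleGraph V) : Prop :=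
  ∀ A B : Finset V, Disjoint A B →
    ∃ c, c ∉ A ∧ c ∉ B ∧ (∀ a ∈ A, G.Adj c a) ∧ ∀ b ∈ B, ¬ G.Adj c b

/-!
Being adjacent to `(b, j)` in the doubled graph means that adjacency to `b` in `G` agrees with
equality of the second coordinates. Hence a vertex is adjacent to exactly one of `(a, i)` and
`(a, ¬i)`, so these two have no common neighbour; and when `a ≠ b`, the extension property
supplies `c` adjacent to `a` whose adjacency to `b` is whatever makes `(c, i)` a common neighbour
of `(a, i)` and `(b, j)`.
-/

theorem doubled_adj_iff {V : Type*} (G : SimpleGraph V) (u v : V × Bool) :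
    (doubled G).Adj u v ↔ (G.Adj u.1 v.1 ↔ u.2 = v.2) := by
  simp only [doubled]
  tauto

theorem doubled_adj_prime_iff {V : Type*} (G : SimpleGraph V) (w u : V × Bool) :
    (doubled G).Adj w (prime u) ↔ ¬ (doubled G).Adj w u := by
  simp only [doubled_adj_iff, prime]
  cases w.2 <;> cases u.2 <;> tauto

theorem eq_prime_of_fst_eq_of_ne {V : Type*} {u v : V × Bool} (h : u.1 = v.1) (huv : u ≠ v) :
    v = prime u := by
  obtain ⟨a, i⟩ := u
  obtain ⟨b, j⟩ := v
  simp only [prime, Prod.mk.injEq] at h huv ⊢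
  subst h
  cases i <;> cases j <;> simp_all

theorem ExtensionProperty.exists_adj_and_adj_iff {V : Type*} {G : SimpleGraph V}
    (hG : ExtensionProperty G) {a b : V} (hab : a ≠ b) (p : Prop) :
    ∃ c, G.Adj c a ∧ (G.Adj c b ↔ p) := by
  classical
  by_cases hp : p
  · obtain ⟨c, -, -, hA, -⟩ := hG {a, b} ∅ (Finset.disjoint_empty_right _)
    exact ⟨c, hA a (by simp), iff_of_true (hA b (by simp)) hp⟩
  · obtain ⟨c, -, -, hA, hB⟩ := hG {a} {b} (by simpa using hab)
    exact ⟨c, hA a (by simp), iff_of_false (hB b (by simp)) hp⟩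

theorem ExtensionProperty.exists_doubled_adj_adj {V : Type*} {G : SimpleGraph V}
    (hG : ExtensionProperty G) {u v : V × Bool} (h : u.1 ≠ v.1) :
    ∃ w, (doubled G).Adj w u ∧ (doubled G).Adj w v := by
  obtain ⟨c, hca, hcb⟩ := hG.exists_adj_and_adj_iff h (u.2 = v.2)
  exact ⟨(c, u.2), (doubled_adj_iff G _ u).2 (iff_of_true hca rfl),
    (doubled_adj_iff G _ v).2 hcb⟩

/-- If `G` has the extension property and `M` is the doubled graph of `G`, then two distinct
vertices `u, v` of `M` have no common neighbor in `M` if and only if they have the same first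
coordinate. -/
theorem statement7 {V : Type*} (G : SimpleGraph V) (hG : ExtensionProperty G)
    (u v : V × Bool) (huv : u ≠ v) :
    (¬ ∃ w : V × Bool, (doubled G).Adj w u ∧ (doubled G).Adj w v) ↔ u.1 = v.1 := by
  constructor
  · intro h
    by_contra hne
    exact h (hG.exists_doubled_adj_adj hne)
  · rintro h ⟨w, hwu, hwv⟩
    rw [eq_prime_of_fst_eq_of_ne h huv, doubled_adj_prime_iff] at hwv
    exact hwv hwu
end

section
/- Let G be a simple graph on a countable vertex set V satisfying the extension property, and let M be the doubled graph of G on V × Bool. Let S, T ⊆ V × Bool be finite sets each closed under the operation u ↦ u', and let f be an isomorphism between the induced subgraphs of M on S and on T such that f(u') = (f(u))' for all u ∈ S. Then f extends to an automorphism of the graph M. -/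
/-! Back and forth. Consider finite partial isomorphisms of `doubled G` that commute with `prime`
and have a `prime`-closed domain. The adjacency pattern that a new vertex `w` has on the domain
changes sign under `prime`, and the domain is a union of pairs `{u, u'}`, so this pattern is fixed
by its restriction to a single layer `V × {i}`. On that layer, adjacency in `doubled G` is
adjacency in `G`, so the extension property of `G` gives an image for `w` (and, symmetrically, a
preimage). A generic ideal of these partial isomorphisms (Rasiowa–Sikorski) then glues
together into an automorphism. -/

section

open Function Set

variable {V : Type*} {G : SimpleGraph V}

@[simp] lemma prime_prime (u : V × Bool) : prime (prime u) = u := by simp [prime]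

lemma prime_ne_self (u : V × Bool) : prime u ≠ u := by simp [prime, Prod.ext_iff]

lemma doubled_adj_iff_of_snd_eq {u v : V × Bool} (h : u.2 = v.2) :
    (doubled G).Adj u v ↔ G.Adj u.1 v.1 := by
  simp [doubled, h]

lemma doubled_adj_prime_right (u v : V × Bool) :
    (doubled G).Adj u (prime v) ↔ ¬ (doubled G).Adj u v := by
  obtain ⟨a, i⟩ := u; obtain ⟨b, j⟩ := v
  cases i <;> cases j <;> simp [doubled, prime]

lemma doubled_adj_prime_left (u v : V × Bool) :
    (doubled G).Adj (prime u) v ↔ ¬ (doubled G).Adj u v := by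
  rw [SimpleGraph.adj_comm, doubled_adj_prime_right, SimpleGraph.adj_comm]

lemma ExtensionProperty.exists_doubled_adj_iff (hG : ExtensionProperty G) {S : Set (V × Bool)}
    (hS : S.Finite) (hSprime : ∀ u ∈ S, prime u ∈ S) {g : V × Bool → V × Bool}
    (hg : InjOn g S) (hgprime : ∀ u ∈ S, g (prime u) = prime (g u)) {ψ : V × Bool → Prop}
    (hψ : ∀ u ∈ S, ψ (prime u) ↔ ¬ ψ u) (i : Bool) :
    ∃ c, (c, i) ∉ g '' S ∧ ∀ u ∈ S, (doubled G).Adj (c, i) (g u) ↔ ψ u := by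
  set A := (fun u => (g u).1) '' {u ∈ S | (g u).2 = i ∧ ψ u}
  set B := (fun u => (g u).1) '' {u ∈ S | (g u).2 = i ∧ ¬ ψ u}
  have hA : A.Finite := (hS.subset (sep_subset _ _)).image _
  have hB : B.Finite := (hS.subset (sep_subset _ _)).image _
  have hAB : Disjoint hA.toFinset hB.toFinset := by
    rw [Finset.disjoint_left]
    simp only [Finite.mem_toFinset, A, B, mem_image, mem_ofPred_eq]
    rintro _ ⟨u, ⟨hu, hui, hψu⟩, rfl⟩ ⟨v, ⟨hv, hvi, hψv⟩, hvu⟩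
    have : g v = g u := Prod.ext hvu (hvi.trans hui.symm)
    exact hψv (hg hv hu this ▸ hψu)
  obtain ⟨c, hcA, hcB, hcadj, hcnadj⟩ := hG _ _ hAB
  simp only [Finite.mem_toFinset] at hcA hcB hcadj hcnadj
  have hsplit : ∀ u ∈ S, (g u).2 = i → (g u).1 ∈ A ∧ ψ u ∨ (g u).1 ∈ B ∧ ¬ ψ u := fun u hu hui =>
    (em (ψ u)).imp (fun h => ⟨⟨u, ⟨hu, hui, h⟩, rfl⟩, h⟩) fun h => ⟨⟨u, ⟨hu, hui, h⟩, rfl⟩, h⟩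
  have hlayer : ∀ u ∈ S, (g u).2 = i → ((doubled G).Adj (c, i) (g u) ↔ ψ u) := by
    intro u hu hui
    rw [doubled_adj_iff_of_snd_eq hui.symm]
    rcases hsplit u hu hui with ⟨hA, h⟩ | ⟨hB, h⟩
    · exact iff_of_true (hcadj _ hA) h
    · exact iff_of_false (hcnadj _ hB) h
  refine ⟨c, ?_, fun u hu => ?_⟩
  · rintro ⟨u, hu, hgu⟩
    rcases hsplit u hu (by rw [hgu]) with ⟨hA, -⟩ | ⟨hB, -⟩
    · exact hcA (by simpa [hgu] using hA)
    · exact hcB (by simpa [hgu] using hB)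
  by_cases hui : (g u).2 = i
  · exact hlayer u hu hui
  -- the partner `prime u` is mapped to the layer `i`, where `c` was chosen
  have hpi : (g (prime u)).2 = i := by
    rw [hgprime u hu]; cases i <;> simpa [prime] using hui
  rw [← not_iff_not, ← doubled_adj_prime_right, ← hgprime u hu, hlayer _ (hSprime u hu) hpi,
    hψ u hu]

def SimpleGraph.IsPartialIso {W : Type*} (H : SimpleGraph W) (D : Set W) (f : W → W) : Prop :=
  InjOn f D ∧ ∀ u ∈ D, ∀ v ∈ D, H.Adj (f u) (f v) ↔ H.Adj u v

lemma SimpleGraph.IsPartialIso.update_insert {W : Type*} [DecidableEq W] {H : SimpleGraph W}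
    {D : Set W} {f : W → W} (hf : H.IsPartialIso D f) {w t : W} (hw : w ∉ D) (ht : t ∉ f '' D)
    (h : ∀ u ∈ D, H.Adj t (f u) ↔ H.Adj w u) : H.IsPartialIso (insert w D) (update f w t) := by
  have heq : EqOn (update f w t) f D := fun u hu => update_of_ne (ne_of_mem_of_not_mem hu hw) _ _
  refine ⟨(injOn_insert hw).2 ⟨hf.1.congr heq.symm, by rwa [update_self, heq.image_eq]⟩, ?_⟩
  rintro u (rfl | hu) v (rfl | hv)
  · simp
  · rw [update_self, heq hv, h v hv]
  · rw [update_self, heq hu, H.adj_comm, h u hu, H.adj_comm]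
  · rw [heq hu, heq hv, hf.2 u hu v hv]

variable (G) in
structure DoubledPartialIso where
  dom : Set (V × Bool)
  toFun : V × Bool → V × Bool
  finite_dom : dom.Finite
  prime_mem : ∀ u ∈ dom, prime u ∈ dom
  isPartialIso : (doubled G).IsPartialIso dom toFun
  map_prime : ∀ u ∈ dom, toFun (prime u) = prime (toFun u)

namespace DoubledPartialIso

instance : Preorder (DoubledPartialIso G) where
  le p q := p.dom ⊆ q.dom ∧ EqOn p.toFun q.toFun p.dom
  le_refl p := ⟨subset_rfl, fun _ _ => rfl⟩
  le_trans _ _ _ hpq hqr := ⟨hpq.1.trans hqr.1, hpq.2.trans (hqr.2.mono hpq.1)⟩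

lemma exists_le_of_adj_iff (p : DoubledPartialIso G) {w t : V × Bool} (hw : w ∉ p.dom)
    (ht : t ∉ p.toFun '' p.dom)
    (h : ∀ u ∈ p.dom, (doubled G).Adj t (p.toFun u) ↔ (doubled G).Adj w u) :
    ∃ q : DoubledPartialIso G, p ≤ q ∧ w ∈ q.dom ∧ q.toFun w = t := by
  classical
  have hw' : prime w ∉ insert w p.dom := by
    rintro (h | h)
    · exact prime_ne_self w h
    · exact hw (by simpa using p.prime_mem _ h)
  have ht' : prime t ∉ update p.toFun w t '' insert w p.dom := by
    rintro ⟨u, hu | hu, hut⟩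
    · rw [hu, update_self] at hut
      exact prime_ne_self t hut.symm
    · rw [update_of_ne (ne_of_mem_of_not_mem hu hw)] at hut
      exact ht ⟨prime u, p.prime_mem u hu, by rw [p.map_prime u hu, hut, prime_prime]⟩
  have h' : ∀ u ∈ insert w p.dom,
      (doubled G).Adj (prime t) (update p.toFun w t u) ↔ (doubled G).Adj (prime w) u := by
    rintro u (rfl | hu)
    · simp [doubled_adj_prime_left]
    · rw [update_of_ne (ne_of_mem_of_not_mem hu hw), doubled_adj_prime_left,
        doubled_adj_prime_left, h u hu]
  set g := update (update p.toFun w t) (prime w) (prime t)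
  have hg : EqOn g p.toFun p.dom := fun u hu => by
    dsimp only [g]
    rw [update_of_ne (ne_of_mem_of_not_mem (mem_insert_of_mem w hu) hw'),
      update_of_ne (ne_of_mem_of_not_mem hu hw)]
  have hgw : g w = t := by dsimp only [g]; rw [update_of_ne (prime_ne_self w).symm, update_self]
  have hgw' : g (prime w) = prime t := update_self ..
  refine ⟨⟨insert (prime w) (insert w p.dom), g, (p.finite_dom.insert w).insert _, ?_,
    (p.isPartialIso.update_insert hw ht h).update_insert hw' ht' h', ?_⟩,
    ⟨(subset_insert _ _).trans (subset_insert _ _), hg.symm⟩, mem_insert_of_mem _ (mem_insert _ _),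
    hgw⟩
  · rintro u (rfl | rfl | hu)
    · simp
    · exact mem_insert _ _
    · exact mem_insert_of_mem _ (mem_insert_of_mem _ (p.prime_mem u hu))
  · rintro u (rfl | rfl | hu)
    · rw [prime_prime, hgw, hgw', prime_prime]
    · rw [hgw, hgw']
    · rw [hg hu, hg (p.prime_mem u hu), p.map_prime u hu]

lemma isCofinal_mem_dom (hG : ExtensionProperty G) (w : V × Bool) :
    IsCofinal {q : DoubledPartialIso G | w ∈ q.dom} := by
  intro p
  by_cases hw : w ∈ p.dom
  · exact ⟨p, hw, le_rfl⟩
  obtain ⟨c, hc, hcadj⟩ := hG.exists_doubled_adj_iff p.finite_dom p.prime_mem p.isPartialIso.1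
    p.map_prime (ψ := fun u => (doubled G).Adj w u) (fun u _ => doubled_adj_prime_right w u) w.2
  obtain ⟨q, hpq, hwq, -⟩ := p.exists_le_of_adj_iff hw hc hcadj
  exact ⟨q, hwq, hpq⟩

lemma isCofinal_mem_image (hG : ExtensionProperty G) (t : V × Bool) :
    IsCofinal {q : DoubledPartialIso G | t ∈ q.toFun '' q.dom} := by
  intro p
  by_cases ht : t ∈ p.toFun '' p.dom
  · exact ⟨p, ht, le_rfl⟩
  obtain ⟨c, hc, hcadj⟩ := hG.exists_doubled_adj_iff p.finite_dom p.prime_mem (g := id)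
    (injOn_id _) (fun _ _ => rfl) (ψ := fun u => (doubled G).Adj t (p.toFun u))
    (fun u hu => by simp only [p.map_prime u hu, doubled_adj_prime_right]) t.2
  obtain ⟨q, hpq, hwq, hqt⟩ :=
    p.exists_le_of_adj_iff (by simpa using hc) ht fun u hu => (hcadj u hu).symm
  exact ⟨q, ⟨_, hwq, hqt⟩, hpq⟩

lemma exists_iso_of_directedOn {I : Set (DoubledPartialIso G)} (hI : DirectedOn (· ≤ ·) I)
    (hdom : ∀ v, ∃ q ∈ I, v ∈ q.dom) (himage : ∀ v, ∃ q ∈ I, v ∈ q.toFun '' q.dom) :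
    ∃ σ : doubled G ≃g doubled G, ∀ q ∈ I, ∀ u ∈ q.dom, σ u = q.toFun u := by
  choose r hrI hr using hdom
  set F : V × Bool → V × Bool := fun v => (r v).toFun v
  have hF : ∀ q ∈ I, ∀ u ∈ q.dom, F u = q.toFun u := fun q hq u hu => by
    obtain ⟨s, -, hrs, hqs⟩ := hI _ (hrI u) _ hq
    exact (hrs.2 (hr u)).trans (hqs.2 hu).symm
  have hpair : ∀ u v, ∃ q ∈ I, u ∈ q.dom ∧ v ∈ q.dom := fun u v => by
    obtain ⟨s, hs, hus, hvs⟩ := hI _ (hrI u) _ (hrI v)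
    exact ⟨s, hs, hus.1 (hr u), hvs.1 (hr v)⟩
  have hinj : Injective F := fun u v huv => by
    obtain ⟨q, hq, hu, hv⟩ := hpair u v
    exact q.isPartialIso.1 hu hv (by rwa [← hF q hq u hu, ← hF q hq v hv])
  have hsurj : Surjective F := fun t => by
    obtain ⟨q, hq, u, hu, rfl⟩ := himage t
    exact ⟨u, hF q hq u hu⟩
  refine ⟨⟨Equiv.ofBijective F ⟨hinj, hsurj⟩, fun {u v} => ?_⟩, hF⟩
  obtain ⟨q, hq, hu, hv⟩ := hpair u v
  change (doubled G).Adj (F u) (F v) ↔ _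
  rw [hF q hq u hu, hF q hq v hv]
  exact q.isPartialIso.2 u hu v hv

theorem exists_iso [Countable V] (hG : ExtensionProperty G) (p : DoubledPartialIso G) :
    ∃ σ : doubled G ≃g doubled G, ∀ u ∈ p.dom, σ u = p.toFun u := by
  have : Encodable ((V × Bool) ⊕ (V × Bool)) := Encodable.ofCountable _
  let D : (V × Bool) ⊕ (V × Bool) → Order.Cofinal (DoubledPartialIso G) :=
    Sum.elim (fun w => ⟨_, isCofinal_mem_dom hG w⟩) (fun t => ⟨_, isCofinal_mem_image hG t⟩)
  let I := Order.idealOfCofinals p D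
  obtain ⟨σ, hσ⟩ := exists_iso_of_directedOn I.directed
    (fun w => (Order.cofinal_meets_idealOfCofinals p D (.inl w)).imp fun _ => And.symm)
    (fun t => (Order.cofinal_meets_idealOfCofinals p D (.inr t)).imp fun _ => And.symm)
  exact ⟨σ, hσ p (Order.mem_idealOfCofinals p D)⟩

end DoubledPartialIso

end

theorem statement9_general {V : Type*} [Countable V] (G : SimpleGraph V) (hG : ExtensionProperty G)
    (S T : Set (V × Bool)) (hSfin : S.Finite)
    (hScl : ∀ u ∈ S, prime u ∈ S)
    (f : V × Bool → V × Bool) (hf : Set.BijOn f S T)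
    (hadj : ∀ u ∈ S, ∀ v ∈ S, (doubled G).Adj u v ↔ (doubled G).Adj (f u) (f v))
    (hprime : ∀ u ∈ S, f (prime u) = prime (f u)) :
    ∃ σ : (doubled G) ≃g (doubled G), ∀ u ∈ S, σ u = f u :=
  DoubledPartialIso.exists_iso hG
    ⟨S, f, hSfin, hScl, ⟨hf.injOn, fun u hu v hv => (hadj u hu v hv).symm⟩, hprime⟩

/-- Let `G` be a simple graph on a countable vertex set with the extension property and let
`M` be its doubled graph. If `S, T ⊆ V × Bool` are finite sets closed under `prime` and
`f` is an isomorphism between the induced subgraphs of `M` on `S` and on `T` (a bijection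
from `S` onto `T` preserving adjacency and non-adjacency) commuting with `prime`, then `f`
extends to an automorphism of `M`. -/
theorem statement9 {V : Type*} [Countable V] (G : SimpleGraph V) (hG : ExtensionProperty G)
    (S T : Set (V × Bool)) (hSfin : S.Finite) (hTfin : T.Finite)
    (hScl : ∀ u ∈ S, prime u ∈ S) (hTcl : ∀ u ∈ T, prime u ∈ T)
    (f : V × Bool → V × Bool) (hf : Set.BijOn f S T)
    (hadj : ∀ u ∈ S, ∀ v ∈ S, (doubled G).Adj u v ↔ (doubled G).Adj (f u) (f v))
    (hprime : ∀ u ∈ S, f (prime u) = prime (f u)) :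
    ∃ σ : (doubled G) ≃g (doubled G), ∀ u ∈ S, σ u = f u :=
  statement9_general G hG S T hSfin hScl f hf hadj hprime
end

section
/- Let G be a simple graph on a countable vertex set V satisfying the extension property, and let M be the doubled graph of G on V × Bool. Then for all distinct a₁, a₂ ∈ V and all distinct b₁, b₂ ∈ V there exists an automorphism σ of M such that σ maps the set {a₁} × Bool onto {b₁} × Bool and the set {a₂} × Bool onto {b₂} × Bool. (In other words, the automorphism group of M acts transitively on ordered pairs of distinct classes of the equivalence relation identifying (a,0) with (a,1).) -/
/-!
Switching `G` along a partition `s : V → Bool` does not change the doubled graph up to the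
isomorphism `(a, i) ↦ (a, s a xor i)`, which preserves the first coordinate, and switching at
finitely many vertices preserves the extension property. Switching at a suitable single vertex
makes `a₁ a₂` and `b₁ b₂` both edges or both non-edges of the switched graph; a back-and-forth
argument then gives an automorphism of it sending `a₁ ↦ b₁` and `a₂ ↦ b₂`, and its lift to the
doubled graph maps the fibre over `aᵢ` onto the fibre over `bᵢ`.
-/

namespace SimpleGraph

variable {V W : Type*}

/-- Seidel switching of `G` along the partition of `V` given by `s`. -/
def switch (G : SimpleGraph V) (s : V → Bool) : SimpleGraph V where
  Adj a b := (s a = s b ∧ G.Adj a b) ∨ (s a ≠ s b ∧ ¬ G.Adj a b)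
  symm := ⟨fun _ _ ↦ by
    rintro (⟨h, hG⟩ | ⟨h, hG⟩)
    exacts [Or.inl ⟨h.symm, hG.symm⟩, Or.inr ⟨Ne.symm h, fun h' ↦ hG h'.symm⟩]⟩
  loopless := ⟨fun _ ↦ by
    rintro (⟨-, h⟩ | ⟨h, -⟩)
    exacts [G.irrefl h, h rfl]⟩

variable {G : SimpleGraph V} {H : SimpleGraph W} {s : V → Bool} {a b : V}

lemma switch_adj :
    (G.switch s).Adj a b ↔ (s a = s b ∧ G.Adj a b) ∨ (s a ≠ s b ∧ ¬ G.Adj a b) := Iff.rfl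

lemma switch_adj_of_eq (h : s a = s b) : (G.switch s).Adj a b ↔ G.Adj a b := by
  simp [switch_adj, h]

lemma switch_adj_of_ne (h : s a ≠ s b) : (G.switch s).Adj a b ↔ ¬ G.Adj a b := by
  simp [switch_adj, h]

theorem exists_switch_adj_iff_adj (G : SimpleGraph V) {a₁ a₂ b₁ b₂ : V} (ha : a₁ ≠ a₂) :
    ∃ s : V → Bool, {x | s x = true}.Finite ∧
      ((G.switch s).Adj a₁ a₂ ↔ (G.switch s).Adj b₁ b₂) := by
  classical
  by_cases h : G.Adj a₁ a₂ ↔ G.Adj b₁ b₂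
  · exact ⟨fun _ ↦ false, by simp, by simpa [switch_adj] using h⟩
  -- otherwise some `aᵢ` is not among the `bⱼ`, and switching at it alone flips only `a₁ a₂`
  obtain ⟨v, hva, hvb₁, hvb₂⟩ : ∃ v, (v = a₁ ∨ v = a₂) ∧ v ≠ b₁ ∧ v ≠ b₂ := by
    by_contra! hv
    rcases or_iff_not_imp_left.2 (hv a₁ (.inl rfl)) with rfl | rfl <;>
      rcases or_iff_not_imp_left.2 (hv a₂ (.inr rfl)) with rfl | rfl
    exacts [ha rfl, h Iff.rfl, h (G.adj_comm _ _), ha rfl]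
  refine ⟨fun x ↦ decide (x = v), by simp, ?_⟩
  rw [switch_adj_of_ne, switch_adj_of_eq (by simp [hvb₁.symm, hvb₂.symm])]
  · exact not_iff.1 h
  · rcases hva with rfl | rfl <;> simp [ha, ha.symm]

/-- Finite partial isomorphisms from `G` to `H`, encoded as finite sets of pairs and ordered by
inclusion. -/
abbrev FinPartialIso (G : SimpleGraph V) (H : SimpleGraph W) : Type _ :=
  { f : Finset (V × W) //
    ∀ p ∈ f, ∀ q ∈ f, (p.1 = q.1 ↔ p.2 = q.2) ∧ (G.Adj p.1 q.1 ↔ H.Adj p.2 q.2) }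

namespace FinPartialIso

def symm (f : FinPartialIso G H) : FinPartialIso H G :=
  ⟨f.1.map (Equiv.prodComm V W).toEmbedding, by
    simp only [Finset.mem_map_equiv]
    intro p hp q hq
    exact (f.2 _ hp _ hq).imp Iff.symm Iff.symm⟩

lemma mem_symm {f : FinPartialIso G H} {a : V} {b : W} : (b, a) ∈ f.symm.1 ↔ (a, b) ∈ f.1 := by
  simp [symm, Finset.mem_map_equiv]

lemma symm_le_symm {f g : FinPartialIso G H} (h : f ≤ g) : f.symm ≤ g.symm :=
  Finset.map_subset_map.2 h

lemma symm_symm (f : FinPartialIso G H) : f.symm.symm = f := by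
  ext p
  simp [symm, Finset.mem_map_equiv]

theorem exists_extend (hH : ExtensionProperty H) (f : FinPartialIso G H) (a : V) :
    ∃ g : FinPartialIso G H, f ≤ g ∧ ∃ b, (a, b) ∈ g.1 := by
  classical
  by_cases ha : ∃ b, (a, b) ∈ f.1
  · exact ⟨f, le_rfl, ha⟩
  push Not at ha
  let A := (f.1.filter fun p ↦ G.Adj a p.1).image Prod.snd
  let B := (f.1.filter fun p ↦ ¬ G.Adj a p.1).image Prod.snd
  have hAB : Disjoint A B := by
    rw [Finset.disjoint_left]
    simp only [A, B, Finset.mem_image, Finset.mem_filter]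
    rintro _ ⟨p, ⟨hp, hap⟩, rfl⟩ ⟨q, ⟨hq, haq⟩, hpq⟩
    exact haq ((f.2 p hp q hq).1.2 hpq.symm ▸ hap)
  obtain ⟨b, hbA, hbB, hbAdj, hbnAdj⟩ := hH A B hAB
  have hnew : ∀ p ∈ f.1, (a = p.1 ↔ b = p.2) ∧ (G.Adj a p.1 ↔ H.Adj b p.2) := by
    intro p hp
    by_cases hap : G.Adj a p.1
    · have hb : p.2 ∈ A := Finset.mem_image_of_mem _ (Finset.mem_filter.2 ⟨hp, hap⟩)
      exact ⟨iff_of_false (fun h ↦ ha p.2 (h ▸ hp)) (fun h ↦ hbA (h ▸ hb)),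
        iff_of_true hap (hbAdj _ hb)⟩
    · have hb : p.2 ∈ B := Finset.mem_image_of_mem _ (Finset.mem_filter.2 ⟨hp, hap⟩)
      exact ⟨iff_of_false (fun h ↦ ha p.2 (h ▸ hp)) (fun h ↦ hbB (h ▸ hb)),
        iff_of_false hap (hbnAdj _ hb)⟩
  refine ⟨⟨insert (a, b) f.1, ?_⟩, Finset.subset_insert _ _, b, Finset.mem_insert_self _ _⟩
  simp only [Finset.mem_insert]
  rintro p (rfl | hp) q (rfl | hq)
  · simp
  · exact hnew q hq
  · exact (hnew p hp).imp (fun h ↦ eq_comm.trans (h.trans eq_comm))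
      (fun h ↦ G.adj_comm _ _ |>.trans (h.trans (H.adj_comm _ _)))
  · exact f.2 p hp q hq

def definedAtLeft (hH : ExtensionProperty H) (a : V) : Order.Cofinal (FinPartialIso G H) where
  carrier := {f | ∃ b, (a, b) ∈ f.1}
  isCofinal f := by
    obtain ⟨g, hfg, hg⟩ := exists_extend hH f a
    exact ⟨g, hg, hfg⟩

def definedAtRight (hG : ExtensionProperty G) (b : W) : Order.Cofinal (FinPartialIso G H) where
  carrier := {f | ∃ a, (a, b) ∈ f.1}
  isCofinal f := by
    obtain ⟨g, hfg, a, hg⟩ := exists_extend hG f.symm b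
    refine ⟨g.symm, ⟨a, mem_symm.2 hg⟩, ?_⟩
    simpa only [symm_symm] using symm_le_symm hfg

end FinPartialIso

end SimpleGraph

section

open SimpleGraph

variable {V W : Type*}

namespace ExtensionProperty

variable {G : SimpleGraph V} {H : SimpleGraph W}

theorem switch (hG : ExtensionProperty G) {s : V → Bool} (hs : {x | s x = true}.Finite) :
    ExtensionProperty (G.switch s) := by
  classical
  intro A B hAB
  -- outside the finite part `s = true` nothing changes, on it the roles of `A` and `B` swap
  let P : V → Prop := fun x ↦ (x ∈ A ↔ s x = false)
  let A' := (A ∪ B).filter P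
  obtain ⟨c, hcA', hcB', hcP, hcnP⟩ := hG A' ((A ∪ B ∪ hs.toFinset) \ A') Finset.disjoint_sdiff
  have hc : c ∉ A ∪ B ∪ hs.toFinset := fun h ↦ hcB' (Finset.mem_sdiff.2 ⟨h, hcA'⟩)
  simp only [Finset.mem_union, Set.Finite.mem_toFinset, Set.mem_ofPred_eq, not_or,
    Bool.not_eq_true] at hc
  obtain ⟨⟨hcA, hcB⟩, hsc⟩ := hc
  have key : ∀ x ∈ A ∪ B, (G.switch s).Adj c x ↔ x ∈ A := by
    intro x hx
    by_cases hPx : P x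
    · have := hcP x (Finset.mem_filter.2 ⟨hx, hPx⟩)
      cases hsx : s x <;> simp_all [P, switch_adj]
    · have := hcnP x (Finset.mem_sdiff.2
        ⟨Finset.mem_union_left _ hx, fun h ↦ hPx (Finset.mem_filter.1 h).2⟩)
      cases hsx : s x <;> simp_all [P, switch_adj]
  refine ⟨c, hcA, hcB, fun a ha ↦ (key a (Finset.mem_union_left _ ha)).2 ha,
    fun b hb ↦ ?_⟩
  rw [key b (Finset.mem_union_right _ hb)]
  exact Finset.disjoint_right.1 hAB hb

open FinPartialIso in
theorem exists_iso_extending [Countable V] [Countable W]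
    (hG : ExtensionProperty G) (hH : ExtensionProperty H) (f : FinPartialIso G H) :
    ∃ φ : G ≃g H, ∀ p ∈ f.1, φ p.1 = p.2 := by
  cases nonempty_encodable V
  cases nonempty_encodable W
  let 𝒟 : V ⊕ W → Order.Cofinal (FinPartialIso G H) :=
    Sum.elim (definedAtLeft hH) (definedAtRight hG)
  let I := Order.idealOfCofinals f 𝒟
  have hI : ∀ g ∈ I, ∀ g' ∈ I, ∀ p ∈ g.1, ∀ q ∈ g'.1,
      (p.1 = q.1 ↔ p.2 = q.2) ∧ (G.Adj p.1 q.1 ↔ H.Adj p.2 q.2) := by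
    intro g hg g' hg' p hp q hq
    obtain ⟨k, -, hgk, hg'k⟩ := I.directed _ hg _ hg'
    exact k.2 p (hgk hp) q (hg'k hq)
  have hdom (a : V) : ∃ b, ∃ g ∈ I, (a, b) ∈ g.1 := by
    obtain ⟨g, ⟨b, hb⟩, hg⟩ := Order.cofinal_meets_idealOfCofinals f 𝒟 (Sum.inl a)
    exact ⟨b, g, hg, hb⟩
  have hcod (b : W) : ∃ a, ∃ g ∈ I, (a, b) ∈ g.1 := by
    obtain ⟨g, ⟨a, ha⟩, hg⟩ := Order.cofinal_meets_idealOfCofinals f 𝒟 (Sum.inr b)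
    exact ⟨a, g, hg, ha⟩
  choose φ gφ hgφ hφ using hdom
  choose ψ gψ hgψ hψ using hcod
  refine ⟨⟨⟨φ, ψ, fun a ↦ ?_, fun b ↦ ?_⟩, fun {a a'} ↦ ?_⟩, fun p hp ↦ ?_⟩
  · exact (hI _ (hgψ _) _ (hgφ a) _ (hψ _) _ (hφ a)).1.2 rfl
  · exact (hI _ (hgφ _) _ (hgψ b) _ (hφ _) _ (hψ b)).1.1 rfl
  · exact (hI _ (hgφ a) _ (hgφ a') _ (hφ a) _ (hφ a')).2.symm
  · exact (hI _ (hgφ _) _ (Order.mem_idealOfCofinals f 𝒟) _ (hφ p.1) _ hp).1.1 rfl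

theorem exists_iso_apply_pair [Countable V] (hG : ExtensionProperty G)
    {a₁ a₂ b₁ b₂ : V} (ha : a₁ ≠ a₂) (hb : b₁ ≠ b₂) (hadj : G.Adj a₁ a₂ ↔ G.Adj b₁ b₂) :
    ∃ φ : G ≃g G, φ a₁ = b₁ ∧ φ a₂ = b₂ := by
  classical
  let f : FinPartialIso G G := ⟨{(a₁, b₁), (a₂, b₂)}, by
    simp only [Finset.mem_insert, Finset.mem_singleton]
    rintro _ (rfl | rfl) _ (rfl | rfl)
    exacts [by simp, ⟨iff_of_false ha hb, hadj⟩,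
      ⟨iff_of_false ha.symm hb.symm, G.adj_comm _ _ |>.trans (hadj.trans (G.adj_comm _ _))⟩,
      by simp]⟩
  obtain ⟨φ, hφ⟩ := hG.exists_iso_extending hG f
  exact ⟨φ, hφ (a₁, b₁) (by simp [f]), hφ (a₂, b₂) (by simp [f])⟩

end ExtensionProperty

lemma doubled_adj {G : SimpleGraph V} {u v : V × Bool} :
    (doubled G).Adj u v ↔ (u.2 = v.2 ∧ G.Adj u.1 v.1) ∨ (u.2 ≠ v.2 ∧ ¬ G.Adj u.1 v.1) :=
  Iff.rfl

def doubledCongr {G : SimpleGraph V} {H : SimpleGraph W} (φ : G ≃g H) :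
    doubled G ≃g doubled H where
  toFun u := (φ u.1, u.2)
  invFun u := (φ.symm u.1, u.2)
  left_inv u := by simp
  right_inv u := by simp
  map_rel_iff' := by simp [doubled_adj, Iso.map_adj_iff]

def doubledSwitchIso (G : SimpleGraph V) (s : V → Bool) : doubled G ≃g doubled (G.switch s) where
  toFun u := (u.1, xor (s u.1) u.2)
  invFun u := (u.1, xor (s u.1) u.2)
  left_inv u := by simp
  right_inv u := by simp
  map_rel_iff' {u v} := by
    obtain ⟨a, i⟩ := u
    obtain ⟨b, j⟩ := v
    change (doubled (G.switch s)).Adj (a, xor (s a) i) (b, xor (s b) j) ↔ _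
    rw [doubled_adj, doubled_adj, switch_adj]
    cases s a <;> cases s b <;> cases i <;> cases j <;> simp

lemma image_singleton_prod_univ_of_fst {α β γ : Type*} (σ : α × β ≃ γ × β) (φ : α ≃ γ)
    (hσ : ∀ u, (σ u).1 = φ u.1) (a : α) :
    σ '' ({a} ×ˢ Set.univ) = {φ a} ×ˢ Set.univ := by
  ext v
  rw [σ.image_eq_preimage_symm]
  simp only [Set.mem_preimage, Set.mem_prod, Set.mem_singleton_iff, Set.mem_univ, and_true]
  rw [← φ.apply_eq_iff_eq, ← hσ, σ.apply_symm_apply]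

end

/-- Let `G` be a simple graph on a countable vertex set with the extension property and let
`M` be its doubled graph. Then for all distinct `a₁, a₂ ∈ V` and distinct `b₁, b₂ ∈ V` there
is an automorphism of `M` mapping `{a₁} × Bool` onto `{b₁} × Bool` and `{a₂} × Bool` onto
`{b₂} × Bool`. -/
theorem statement10 {V : Type*} [Countable V] (G : SimpleGraph V) (hG : ExtensionProperty G)
    (a₁ a₂ b₁ b₂ : V) (ha : a₁ ≠ a₂) (hb : b₁ ≠ b₂) :
    ∃ σ : (doubled G) ≃g (doubled G),
      (fun u => σ u) '' (({a₁} : Set V) ×ˢ (Set.univ : Set Bool)) =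
        ({b₁} : Set V) ×ˢ (Set.univ : Set Bool) ∧
      (fun u => σ u) '' (({a₂} : Set V) ×ˢ (Set.univ : Set Bool)) =
        ({b₂} : Set V) ×ˢ (Set.univ : Set Bool) := by
  obtain ⟨s, hs, hadj⟩ := G.exists_switch_adj_iff_adj (b₁ := b₁) (b₂ := b₂) ha
  obtain ⟨φ, hφ₁, hφ₂⟩ := (hG.switch hs).exists_iso_apply_pair ha hb hadj
  let σ : doubled G ≃g doubled G :=
    (doubledSwitchIso G s).trans ((doubledCongr φ).trans (doubledSwitchIso G s).symm)
  have hσ (u : V × Bool) : (σ u).1 = φ u.1 := rfl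
  refine ⟨σ, ?_, ?_⟩
  · rw [← hφ₁]
    exact image_singleton_prod_univ_of_fst σ.toEquiv φ.toEquiv hσ a₁
  · rw [← hφ₂]
    exact image_singleton_prod_univ_of_fst σ.toEquiv φ.toEquiv hσ a₂
end

section
/- Let G be a simple graph on a vertex set V and let M be the doubled graph of G on V × Bool. Suppose u₁, u₂, u₃ ∈ V are distinct vertices such that u₁ is adjacent to u₂ in G, u₁ is adjacent to u₃ in G, and u₂ is not adjacent to u₃ in G. Then the induced subgraph of M on the six-element set {u₁, u₂, u₃} × Bool is triangle-free: it contains no three pairwise adjacent vertices. -/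
/-!
Adjacency in the doubled graph says `(a, i) ~ (b, j)` iff `i = j ↔ a ~ b`. Around a triangle
the three level comparisons `i = j`, `i = k`, `j = k` of booleans hold an odd number of times,
so the base vertices of a triangle of the doubled graph span an odd number of edges of `G`
(counted over the three pairs). Every triple over `{u₁, u₂, u₃}` spans an even number: two for
the path `u₂ - u₁ - u₃` itself, and zero or two when a vertex repeats, since then one pair is a
loop and the other two coincide.
-/

theorem doubled_adj_iff_s11 {V : Type*} {G : SimpleGraph V} {x y : V × Bool} :
    (doubled G).Adj x y ↔ (x.2 = y.2 ↔ G.Adj x.1 y.1) := by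
  simp only [doubled]
  tauto

theorem doubled_adj_triangle {V : Type*} {G : SimpleGraph V} {x y z : V × Bool}
    (hxy : (doubled G).Adj x y) (hxz : (doubled G).Adj x z) (hyz : (doubled G).Adj y z) :
    G.Adj x.1 y.1 ↔ (G.Adj x.1 z.1 ↔ G.Adj y.1 z.1) := by
  have levels : x.2 = y.2 ↔ (x.2 = z.2 ↔ y.2 = z.2) := by
    cases x.2 <;> cases y.2 <;> cases z.2 <;> decide
  rwa [doubled_adj_iff_s11.1 hxy, doubled_adj_iff_s11.1 hxz, doubled_adj_iff_s11.1 hyz] at levels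

theorem not_adj_iff_adj_iff_of_mem_path {V : Type*} {G : SimpleGraph V} {u₁ u₂ u₃ : V}
    (a12 : G.Adj u₁ u₂) (a13 : G.Adj u₁ u₃) (a23 : ¬ G.Adj u₂ u₃) {a b c : V}
    (ha : a ∈ ({u₁, u₂, u₃} : Set V)) (hb : b ∈ ({u₁, u₂, u₃} : Set V))
    (hc : c ∈ ({u₁, u₂, u₃} : Set V)) :
    ¬ (G.Adj a b ↔ (G.Adj a c ↔ G.Adj b c)) := by
  have a32 : ¬ G.Adj u₃ u₂ := fun h => a23 h.symm
  simp only [Set.mem_insert_iff, Set.mem_singleton_iff] at ha hb hc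
  rcases ha with rfl | rfl | rfl <;> rcases hb with rfl | rfl | rfl <;>
    rcases hc with rfl | rfl | rfl <;> simp [a12, a13, a12.symm, a13.symm, a23, a32]

theorem statement11_general {V : Type*} (G : SimpleGraph V) (u₁ u₂ u₃ : V)
    (a12 : G.Adj u₁ u₂) (a13 : G.Adj u₁ u₃) (a23 : ¬ G.Adj u₂ u₃) :
    ¬ ∃ x y z : V × Bool,
        x.1 ∈ ({u₁, u₂, u₃} : Set V) ∧ y.1 ∈ ({u₁, u₂, u₃} : Set V) ∧
        z.1 ∈ ({u₁, u₂, u₃} : Set V) ∧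
        (doubled G).Adj x y ∧ (doubled G).Adj x z ∧ (doubled G).Adj y z := by
  rintro ⟨x, y, z, hx, hy, hz, hxy, hxz, hyz⟩
  exact not_adj_iff_adj_iff_of_mem_path a12 a13 a23 hx hy hz (doubled_adj_triangle hxy hxz hyz)

/-- If `u₁, u₂, u₃` are distinct vertices of `G` with `u₁ ~ u₂`, `u₁ ~ u₃` and `u₂ ≁ u₃`,
then the induced subgraph of the doubled graph `M` on `{u₁, u₂, u₃} × Bool` is triangle-free:
it contains no three pairwise adjacent vertices. -/
theorem statement11 {V : Type*} (G : SimpleGraph V) (u₁ u₂ u₃ : V)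
    (h12 : u₁ ≠ u₂) (h13 : u₁ ≠ u₃) (h23 : u₂ ≠ u₃)
    (a12 : G.Adj u₁ u₂) (a13 : G.Adj u₁ u₃) (a23 : ¬ G.Adj u₂ u₃) :
    ¬ ∃ x y z : V × Bool,
        x.1 ∈ ({u₁, u₂, u₃} : Set V) ∧ y.1 ∈ ({u₁, u₂, u₃} : Set V) ∧
        z.1 ∈ ({u₁, u₂, u₃} : Set V) ∧
        (doubled G).Adj x y ∧ (doubled G).Adj x z ∧ (doubled G).Adj y z :=
  statement11_general G u₁ u₂ u₃ a12 a13 a23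
end
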